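/- arXiv:2203.11761 — 10 statements merged into one kernel-verified Lean document; each statement's English description precedes it below -/
import Mathlib

section
/- Let c : ℕ → ℕ → ℕ be defined by the recurrence c n k = c (n-1) k + c (n-2) (k-1) + c (n-3) (k-1) + c (n-4) (k-2) for n ≥ 4 with initial values c 0 0 = 1, c 1 0 = 1, c 2 0 = 1, c 2 1 = 1, c 3 0 = 1, c 3 1 = 3, and c n k = 0 whenever 2k > n or k < 0. Then for all n and all k with 2k ≤ n, c n k = ∑_{m=0}^{k} (n-k-m choose m) * (n-k-m choose n-2k). -/
def gg (N a : ℕ) : ℕ := ∑ m ∈ Finset.range (N+1), Nat.choose (N-m) m * Nat.choose (N-m) a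

lemma gvanish (N a : ℕ) (h : N < a) : gg N a = 0 := by
  unfold gg
  apply Finset.sum_eq_zero
  intro m _
  rw [Nat.choose_eq_zero_of_lt (show N - m < a by omega), mul_zero]

lemma gS (N t : ℕ) :
    ∑ m ∈ Finset.range (N+2), Nat.choose (N+2-m) m * Nat.choose (N+1-m) t
      = gg (N+1) t + gg N t := by
  rw [Finset.sum_range_succ' _ (N+1)]
  have h1 : ∀ m ∈ Finset.range (N+1),
      Nat.choose (N+2-(m+1)) (m+1) * Nat.choose (N+1-(m+1)) t
        = Nat.choose (N-m) m * Nat.choose (N-m) t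
          + Nat.choose (N-m) (m+1) * Nat.choose (N-m) t := by
    intro m hm
    rw [Finset.mem_range] at hm
    have e1 : N+2-(m+1) = (N-m)+1 := by omega
    have e2 : N+1-(m+1) = N-m := by omega
    rw [e1, e2, Nat.choose_succ_succ, add_mul]
  rw [Finset.sum_congr rfl h1, Finset.sum_add_distrib]
  have h2 : gg (N+1) t
      = ∑ m ∈ Finset.range (N+1), Nat.choose (N-m) (m+1) * Nat.choose (N-m) t
        + Nat.choose (N+1) 0 * Nat.choose (N+1) t := by
    unfold gg
    rw [Finset.sum_range_succ' (fun m => Nat.choose (N+1-m) m * Nat.choose (N+1-m) t) (N+1)]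
    congr 1
    apply Finset.sum_congr rfl
    intro m hm
    rw [Finset.mem_range] at hm
    have e2 : N+1-(m+1) = N-m := by omega
    rw [e2]
  rw [h2]
  unfold gg
  simp [Nat.choose_zero_right]
  ring

lemma grec (N a : ℕ) :
    gg (N+2) (a+1) = gg (N+1) (a+1) + gg (N+1) a + gg N (a+1) + gg N a := by
  have hL : gg (N+2) (a+1)
      = ∑ m ∈ Finset.range (N+2),
          (Nat.choose (N+2-m) m * Nat.choose (N+1-m) a
            + Nat.choose (N+2-m) m * Nat.choose (N+1-m) (a+1)) := by
    unfold gg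
    rw [Finset.sum_range_succ]
    have e0 : N+2-(N+2) = 0 := by omega
    rw [e0, Nat.choose_eq_zero_of_lt (show 0 < N+2 by omega), zero_mul, add_zero]
    apply Finset.sum_congr rfl
    intro m hm
    rw [Finset.mem_range] at hm
    have e1 : N+2-m = (N+1-m)+1 := by omega
    conv_lhs => rw [e1, Nat.choose_succ_succ ((N+1-m)) a, mul_add, ← e1]
  rw [hL, Finset.sum_add_distrib, gS, gS]
  ring

lemma g0rec (N : ℕ) : gg (N+2) 0 = gg (N+1) 0 + gg N 0 := by
  have hL : gg (N+2) 0
      = ∑ m ∈ Finset.range (N+2), Nat.choose (N+2-m) m * Nat.choose (N+1-m) 0 := by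
    unfold gg
    rw [Finset.sum_range_succ]
    have e0 : N+2-(N+2) = 0 := by omega
    rw [e0, Nat.choose_eq_zero_of_lt (show 0 < N+2 by omega), zero_mul, add_zero]
    simp [Nat.choose_zero_right]
  rw [hL, gS]

lemma Fg (n k : ℕ) (h : 2*k ≤ n) :
    ∑ m ∈ Finset.range (k+1), Nat.choose (n-k-m) m * Nat.choose (n-k-m) (n-2*k)
      = gg (n-k) (n-2*k) := by
  unfold gg
  apply Finset.sum_subset
  · intro x hx
    rw [Finset.mem_range] at *
    omega
  · intro x hx hx'
    rw [Finset.mem_range] at hx hx'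
    rw [Nat.choose_eq_zero_of_lt (show n-k-x < n-2*k by omega), mul_zero]

theorem stmt_2 (c : ℕ → ℤ → ℕ)
    (hneg : ∀ n : ℕ, ∀ k : ℤ, k < 0 → c n k = 0)
    (hbig : ∀ n : ℕ, ∀ k : ℤ, (n : ℤ) < 2 * k → c n k = 0)
    (h00 : c 0 0 = 1) (h10 : c 1 0 = 1) (h20 : c 2 0 = 1) (h21 : c 2 1 = 1)
    (h30 : c 3 0 = 1) (h31 : c 3 1 = 3)
    (hrec : ∀ n : ℕ, 4 ≤ n → ∀ k : ℤ,
      c n k = c (n - 1) k + c (n - 2) (k - 1) + c (n - 3) (k - 1) + c (n - 4) (k - 2)) :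
    ∀ n k : ℕ, 2 * k ≤ n →
      c n (k : ℤ) = ∑ m ∈ Finset.range (k + 1),
        Nat.choose (n - k - m) m * Nat.choose (n - k - m) (n - 2 * k) := by
  have key : ∀ n : ℕ, ∀ k : ℕ, 2*k ≤ n → c n (k:ℤ) = gg (n-k) (n-2*k) := by
    intro n
    induction n using Nat.strong_induction_on with
    | _ n ih =>
      intro k hk
      rcases Nat.lt_or_ge n 4 with h4 | h4
      · interval_cases n <;>
          (have hk2 : k ≤ 1 := by omega
           interval_cases k <;>
             first
             | omega
             | (simp only [Nat.cast_zero, Nat.cast_one, h00, h10, h20, h21, h30, h31]; decide))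
      · rw [hrec n h4 (k:ℤ)]
        rcases Nat.eq_zero_or_pos k with rfl | hk1
        · rw [hneg (n-2) _ (by norm_num), hneg (n-3) _ (by norm_num),
            hneg (n-4) _ (by norm_num), ih (n-1) (by omega) 0 (by omega)]
          simp only [Nat.sub_zero, Nat.mul_zero, add_zero]
          obtain ⟨N, rfl⟩ : ∃ N, n = N + 2 := ⟨n-2, by omega⟩
          have e1 : N + 2 - 1 = N + 1 := by omega
          rw [e1, show (N+2 : ℕ) = (N+1)+1 from rfl,
            grec N (N+1), gvanish (N+1) (N+2) (by omega), gvanish N (N+2) (by omega),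
            gvanish N (N+1) (by omega)]
          omega
        · have e1 : (k:ℤ) - 1 = ((k-1:ℕ):ℤ) := by omega
          rw [e1]
          rcases Nat.lt_or_ge (2*k) n with hlt | hge
          · -- 2*k ≤ n - 1
            rw [ih (n-1) (by omega) k (by omega),
              ih (n-2) (by omega) (k-1) (by omega),
              ih (n-3) (by omega) (k-1) (by omega)]
            obtain ⟨N, hN⟩ : ∃ N, n - k = N + 2 := ⟨n-k-2, by omega⟩
            obtain ⟨a, ha⟩ : ∃ a, n - 2*k = a + 1 := ⟨n-2*k-1, by omega⟩
            have i1 : n - 1 - k = N + 1 := by omega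
            have i2 : n - 1 - 2*k = a := by omega
            have i3 : n - 2 - (k-1) = N + 1 := by omega
            have i4 : n - 2 - 2*(k-1) = a + 1 := by omega
            have i5 : n - 3 - (k-1) = N := by omega
            have i6 : n - 3 - 2*(k-1) = a := by omega
            rw [hN, ha, i1, i2, i3, i4, i5, i6, grec N a]
            rcases Nat.lt_or_ge k 2 with hk2 | hk2
            · -- k = 1
              rw [hneg (n-4) _ (by omega), gvanish N (a+1) (by omega)]
              ring
            · have e2 : (k:ℤ) - 2 = ((k-2:ℕ):ℤ) := by omega
              rw [e2, ih (n-4) (by omega) (k-2) (by omega)]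
              have i7 : n - 4 - (k-2) = N := by omega
              have i8 : n - 4 - 2*(k-2) = a + 1 := by omega
              rw [i7, i8]
              ring
          · -- 2*k = n
            have hk2 : 2 ≤ k := by omega
            rw [hbig (n-1) (k:ℤ) (by omega), hbig (n-3) _ (by omega),
              ih (n-2) (by omega) (k-1) (by omega)]
            have e2 : (k:ℤ) - 2 = ((k-2:ℕ):ℤ) := by omega
            rw [e2, ih (n-4) (by omega) (k-2) (by omega)]
            obtain ⟨N, hN⟩ : ∃ N, n - k = N + 2 := ⟨n-k-2, by omega⟩
            have i0 : n - 2*k = 0 := by omega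
            have i3 : n - 2 - (k-1) = N + 1 := by omega
            have i4 : n - 2 - 2*(k-1) = 0 := by omega
            have i7 : n - 4 - (k-2) = N := by omega
            have i8 : n - 4 - 2*(k-2) = 0 := by omega
            rw [hN, i0, i3, i4, i7, i8, g0rec N]
            ring
  intro n k hk
  rw [key n k hk]
  exact (Fg n k hk).symm
end

section
/- Let c : ℕ → ℕ → ℕ satisfy the recurrence c n k = c (n-1) k + c (n-2) (k-1) + c (n-3) (k-1) + c (n-4) (k-2) for n ≥ 4 (terms with negative indices are 0), with c 0 0 = c 1 0 = c 2 0 = c 2 1 = c 3 0 = 1 and c 3 1 = 3 and c n k = 0 for 2k > n. Let F : ℕ → ℕ be the Fibonacci sequence with F 0 = 0, F 1 = 1. Then for all n, c (2n) n = F (n+1). -/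
theorem stmt_3 (c : ℕ → ℤ → ℕ)
    (hneg : ∀ n : ℕ, ∀ k : ℤ, k < 0 → c n k = 0)
    (hbig : ∀ n : ℕ, ∀ k : ℤ, (n : ℤ) < 2 * k → c n k = 0)
    (h00 : c 0 0 = 1) (h10 : c 1 0 = 1) (h20 : c 2 0 = 1) (h21 : c 2 1 = 1)
    (h30 : c 3 0 = 1) (h31 : c 3 1 = 3)
    (hrec : ∀ n : ℕ, 4 ≤ n → ∀ k : ℤ,
      c n k = c (n - 1) k + c (n - 2) (k - 1) + c (n - 3) (k - 1) + c (n - 4) (k - 2)) :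
    ∀ n : ℕ, c (2 * n) (n : ℤ) = Nat.fib (n + 1) := by
  intro n
  induction n using Nat.strong_induction_on with
  | _ n ih =>
    match n with
    | 0 => simpa using h00
    | 1 => simpa using h21
    | (m+2) =>
      have hr := hrec (2*(m+2)) (by omega) ((m:ℤ)+2)
      have e1 : c (2*(m+2)-1) ((m:ℤ)+2) = 0 := hbig _ _ (by push_cast; omega)
      have e3 : c (2*(m+2)-3) ((m:ℤ)+2-1) = 0 := hbig _ _ (by push_cast; omega)
      have i2 : 2*(m+2)-2 = 2*(m+1) := by omega
      have i4 : 2*(m+2)-4 = 2*m := by omega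
      have ih1 := ih (m+1) (by omega)
      have ih0 := ih m (by omega)
      have k1 : ((m:ℤ)+2)-1 = ((m+1 : ℕ) : ℤ) := by push_cast; ring
      have k2 : ((m:ℤ)+2)-2 = (m : ℤ) := by ring
      rw [e1, e3, i2, i4, k1, k2] at hr
      push_cast at hr ih1 ih0 ⊢
      rw [hr, ih1, ih0]
      have hf : Nat.fib (m+2+1) = Nat.fib (m+1) + Nat.fib (m+1+1) := Nat.fib_add_two
      omega
end

section
/- Let Q be the tetranacci sequence: Q 0 = Q 1 = Q 2 = 0, Q 3 = 1, Q n = Q(n-1)+Q(n-2)+Q(n-3)+Q(n-4) for n ≥ 4. Then for all n, Q (n+3) = ∑_{k=0}^{⌊n/2⌋} ∑_{m=0}^{k} (n-k-m choose m) * (n-k-m choose n-2k). -/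
open Polynomial Finset

noncomputable def Ypoly : Polynomial ℕ := Polynomial.X * ((1 + Polynomial.X) * (1 + Polynomial.X ^ 2))

lemma Ypoly_pow_coeff (p n : ℕ) : (Ypoly ^ p).coeff n =
    ∑ m ∈ range (p + 1), ∑ j ∈ range (p + 1),
      (p.choose m * p.choose j) * (if n = p + 2 * m + j then 1 else 0) := by
  have h1 : (1 + (X : ℕ[X])) ^ p = ∑ j ∈ range (p + 1), Polynomial.C (p.choose j) * X ^ j := by
    rw [add_comm, add_pow]
    refine Finset.sum_congr rfl fun j hj => ?_
    simp [mul_comm, C_eq_natCast]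
  have h2 : (1 + (X : ℕ[X]) ^ 2) ^ p = ∑ m ∈ range (p + 1), Polynomial.C (p.choose m) * X ^ (2 * m) := by
    rw [add_comm, add_pow]
    refine Finset.sum_congr rfl fun m hm => ?_
    rw [pow_mul]
    simp [mul_comm, C_eq_natCast]
  have hY : Ypoly ^ p = ((1 + (X : ℕ[X]) ^ 2) ^ p * (1 + (X : ℕ[X])) ^ p) * X ^ p := by
    rw [Ypoly, show (X : ℕ[X]) * ((1 + X) * (1 + X ^ 2)) = (1 + X ^ 2) * (1 + X) * X by ring,
      mul_pow, mul_pow]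
  rw [hY, coeff_mul_X_pow', h2, h1, sum_mul_sum]
  by_cases hp : p ≤ n
  · simp only [if_pos hp, finset_sum_coeff]
    refine Finset.sum_congr rfl fun m hm => ?_
    refine Finset.sum_congr rfl fun j hj => ?_
    rw [show Polynomial.C (p.choose m) * X ^ (2*m) * (Polynomial.C (p.choose j) * X ^ j)
        = Polynomial.C (p.choose m * p.choose j) * X ^ (2*m + j) by rw [C_mul, pow_add]; ring,
      coeff_C_mul, coeff_X_pow]
    congr 1
    by_cases h : n = p + 2 * m + j
    · rw [if_pos h, if_pos (by omega)]
    · rw [if_neg h, if_neg (by omega)]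
  · rw [if_neg hp]
    symm
    refine Finset.sum_eq_zero fun m hm => Finset.sum_eq_zero fun j hj => ?_
    rw [if_neg (by omega), mul_zero]

noncomputable def Ppoly (N : ℕ) : Polynomial ℕ := ∑ p ∈ range N, Ypoly ^ p

noncomputable def Sseq (n : ℕ) : ℕ := (Ppoly (n + 1)).coeff n

lemma Ypow_coeff_zero {p n : ℕ} (h : n < p) : (Ypoly ^ p).coeff n = 0 := by
  rw [Ypoly_pow_coeff]
  refine Finset.sum_eq_zero fun m hm => Finset.sum_eq_zero fun j hj => ?_
  rw [if_neg (by omega), mul_zero]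

lemma Ppoly_coeff_stable {N n : ℕ} (h : n < N) : (Ppoly N).coeff n = Sseq n := by
  rw [Sseq, Ppoly, Ppoly, ← Finset.sum_range_add_sum_Ico _ (by omega : n + 1 ≤ N),
    Polynomial.coeff_add]
  have : (∑ p ∈ Finset.Ico (n + 1) N, Ypoly ^ p).coeff n = 0 := by
    rw [Polynomial.finset_sum_coeff]
    refine Finset.sum_eq_zero fun p hp => ?_
    rw [Finset.mem_Ico] at hp
    exact Ypow_coeff_zero (by omega)
  rw [this, add_zero]

lemma Sseq_rec (n : ℕ) : Sseq (n + 4) = Sseq (n + 3) + Sseq (n + 2) + Sseq (n + 1) + Sseq n := by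
  have h : Ppoly (n + 5) = Ypoly * Ppoly (n + 4) + 1 := geom_sum_succ
  have hc : Sseq (n + 4) = (Ypoly * Ppoly (n + 4)).coeff (n + 4) := by
    rw [Sseq, h, Polynomial.coeff_add]
    have : (1 : ℕ[X]).coeff (n + 4) = 0 := by simp [Polynomial.coeff_one]
    rw [this, add_zero]
  rw [hc, show Ypoly * Ppoly (n+4) = Ppoly (n+4) * X + Ppoly (n+4) * X^2
      + Ppoly (n+4) * X^3 + Ppoly (n+4) * X^4 by rw [Ypoly]; ring]
  simp only [Polynomial.coeff_add]
  rw [show Ppoly (n+4) * X = Ppoly (n+4) * X^1 by ring]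
  rw [coeff_mul_X_pow', coeff_mul_X_pow', coeff_mul_X_pow', coeff_mul_X_pow']
  rw [if_pos (by omega), if_pos (by omega), if_pos (by omega), if_pos (by omega)]
  rw [show n + 4 - 1 = n + 3 by omega, show n + 4 - 2 = n + 2 by omega,
    show n + 4 - 3 = n + 1 by omega, show n + 4 - 4 = n by omega]
  rw [Ppoly_coeff_stable (by omega), Ppoly_coeff_stable (by omega),
    Ppoly_coeff_stable (by omega), Ppoly_coeff_stable (by omega)]

lemma Sseq_eq_filtered (n : ℕ) : Sseq n =
    ∑ q ∈ ((range (n+1)) ×ˢ (range (n+1))).filter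
        (fun q => q.2 ≤ q.1 ∧ q.1 + 2 * q.2 ≤ n ∧ n ≤ 2 * q.1 + 2 * q.2),
      (q.1.choose q.2) * (q.1.choose (n - q.1 - 2 * q.2)) := by
  have h1 : Sseq n = ∑ p ∈ range (n+1), ∑ m ∈ range (p+1), ∑ j ∈ range (p+1),
      (p.choose m * p.choose j) * (if n = p + 2 * m + j then 1 else 0) := by
    rw [Sseq, Ppoly, Polynomial.finset_sum_coeff]
    exact Finset.sum_congr rfl fun p _ => Ypoly_pow_coeff p n
  have h2 : ∀ p m : ℕ, (∑ j ∈ range (p+1),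
      (p.choose m * p.choose j) * (if n = p + 2 * m + j then 1 else 0)) =
      (if p + 2*m ≤ n ∧ n - p - 2*m ≤ p then p.choose m * p.choose (n - p - 2*m) else 0) := by
    intro p m
    by_cases hc : p + 2*m ≤ n ∧ n - p - 2*m ≤ p
    · rw [if_pos hc]
      have hmem : n - p - 2*m ∈ range (p+1) := Finset.mem_range.mpr (by omega)
      rw [Finset.sum_eq_single_of_mem _ hmem (fun j hj hne => by
        rw [Finset.mem_range] at hj
        rw [if_neg (by omega), mul_zero])]
      rw [if_pos (by omega), mul_one]
    · rw [if_neg hc]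
      refine Finset.sum_eq_zero fun j hj => ?_
      rw [Finset.mem_range] at hj
      rw [if_neg (by omega), mul_zero]
  rw [h1]
  simp only [h2]
  have h3 : ∀ p ∈ range (n+1), (∑ m ∈ range (p+1),
      (if p + 2*m ≤ n ∧ n - p - 2*m ≤ p then p.choose m * p.choose (n - p - 2*m) else 0)) =
      ∑ m ∈ range (n+1),
      (if m ≤ p ∧ p + 2*m ≤ n ∧ n - p - 2*m ≤ p then p.choose m * p.choose (n - p - 2*m) else 0) := by
    intro p hp
    rw [Finset.mem_range] at hp
    rw [Finset.sum_subset (Finset.range_subset_range.mpr (by omega : p + 1 ≤ n + 1))]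
    · refine Finset.sum_congr rfl fun m hm => ?_
      by_cases hc : p + 2*m ≤ n ∧ n - p - 2*m ≤ p
      · by_cases hmp : m ≤ p
        · rw [if_pos hc, if_pos ⟨hmp, hc⟩]
        · rw [if_pos hc, if_neg (by tauto), Nat.choose_eq_zero_of_lt (by omega), zero_mul]
      · rw [if_neg hc, if_neg (by tauto)]
    · intro m hm hm'
      rw [Finset.mem_range] at hm hm'
      by_cases hc : p + 2*m ≤ n ∧ n - p - 2*m ≤ p
      · rw [if_pos hc, Nat.choose_eq_zero_of_lt (by omega), zero_mul]
      · rw [if_neg hc]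
  rw [Finset.sum_congr rfl h3, ← Finset.sum_product']
  rw [Finset.sum_filter]
  refine Finset.sum_congr rfl fun q hq => ?_
  by_cases hc : q.2 ≤ q.1 ∧ q.1 + 2 * q.2 ≤ n ∧ n ≤ 2 * q.1 + 2 * q.2
  · rw [if_pos (show q.2 ≤ q.1 ∧ q.1 + 2*q.2 ≤ n ∧ n - q.1 - 2*q.2 ≤ q.1 by omega), if_pos hc]
  · rw [if_neg (show ¬(q.2 ≤ q.1 ∧ q.1 + 2*q.2 ≤ n ∧ n - q.1 - 2*q.2 ≤ q.1) by omega), if_neg hc]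

lemma Tsum_eq_filtered (n : ℕ) :
    (∑ k ∈ range (n / 2 + 1), ∑ m ∈ range (k + 1),
      Nat.choose (n - k - m) m * Nat.choose (n - k - m) (n - 2 * k)) =
    ∑ q ∈ ((range (n / 2 + 1)) ×ˢ (range (n + 1))).filter
        (fun q => q.2 ≤ q.1 ∧ q.1 + 2 * q.2 ≤ n),
      Nat.choose (n - q.1 - q.2) q.2 * Nat.choose (n - q.1 - q.2) (n - 2 * q.1) := by
  have h1 : ∀ k ∈ range (n / 2 + 1), (∑ m ∈ range (k + 1),
      Nat.choose (n - k - m) m * Nat.choose (n - k - m) (n - 2 * k)) =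
      ∑ m ∈ range (n + 1), (if m ≤ k ∧ k + 2 * m ≤ n then
        Nat.choose (n - k - m) m * Nat.choose (n - k - m) (n - 2 * k) else 0) := by
    intro k hk
    rw [Finset.mem_range] at hk
    have hzero : ∀ m : ℕ, ¬(m ≤ k ∧ k + 2 * m ≤ n) →
        Nat.choose (n - k - m) m * Nat.choose (n - k - m) (n - 2 * k) = 0 := by
      intro m hc
      rcases Nat.lt_or_ge (n - k - m) m with h | h
      · rw [Nat.choose_eq_zero_of_lt h, zero_mul]
      · rw [Nat.choose_eq_zero_of_lt (show n - k - m < n - 2 * k by omega), mul_zero]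
    rw [Finset.sum_subset (Finset.range_subset_range.mpr (by omega : k + 1 ≤ n + 1))]
    · refine Finset.sum_congr rfl fun m hm => ?_
      by_cases hc : m ≤ k ∧ k + 2 * m ≤ n
      · rw [if_pos hc]
      · rw [if_neg hc, hzero m hc]
    · intro m hm hm'
      rw [Finset.mem_range] at hm hm'
      exact hzero m (by omega)
  rw [Finset.sum_congr rfl h1, ← Finset.sum_product', Finset.sum_filter]

lemma Sseq_eq_Tsum (n : ℕ) : Sseq n = ∑ k ∈ range (n / 2 + 1), ∑ m ∈ range (k + 1),
    Nat.choose (n - k - m) m * Nat.choose (n - k - m) (n - 2 * k) := by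
  rw [Sseq_eq_filtered, Tsum_eq_filtered]
  refine Finset.sum_nbij' (fun q => (n - q.1 - q.2, q.2)) (fun q => (n - q.1 - q.2, q.2))
    ?_ ?_ ?_ ?_ ?_
  · intro a ha
    simp only [Finset.mem_filter, Finset.mem_product, Finset.mem_range] at ha ⊢
    omega
  · intro a ha
    simp only [Finset.mem_filter, Finset.mem_product, Finset.mem_range] at ha ⊢
    omega
  · intro a ha
    simp only [Finset.mem_filter, Finset.mem_product, Finset.mem_range] at ha
    have : n - (n - a.1 - a.2) - a.2 = a.1 := by omega
    simp [this]
  · intro a ha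
    simp only [Finset.mem_filter, Finset.mem_product, Finset.mem_range] at ha
    have : n - (n - a.1 - a.2) - a.2 = a.1 := by omega
    simp [this]
  · intro a ha
    simp only [Finset.mem_filter, Finset.mem_product, Finset.mem_range] at ha
    obtain ⟨⟨hp, hm⟩, hmp, h1, h2⟩ := ha
    have e1 : n - (n - a.1 - a.2) - a.2 = a.1 := by omega
    have e2 : n - 2 * (n - a.1 - a.2) = a.1 - (n - a.1 - 2 * a.2) := by omega
    rw [e1, e2, Nat.choose_symm (by omega)]

theorem stmt_4 (Q : ℕ → ℕ)
    (Q0 : Q 0 = 0) (Q1 : Q 1 = 0) (Q2 : Q 2 = 0) (Q3 : Q 3 = 1)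
    (Qrec : ∀ n, Q (n + 4) = Q (n + 3) + Q (n + 2) + Q (n + 1) + Q n) :
    ∀ n : ℕ, Q (n + 3) = ∑ k ∈ Finset.range (n / 2 + 1), ∑ m ∈ Finset.range (k + 1),
      Nat.choose (n - k - m) m * Nat.choose (n - k - m) (n - 2 * k) := by
  have main : ∀ n : ℕ, Q (n + 3) = Sseq n := by
    intro n
    induction n using Nat.strong_induction_on with
    | _ n ih =>
      match n with
      | 0 =>
        have hS : Sseq 0 = 1 := by rw [Sseq_eq_Tsum]; decide
        norm_num
        omega
      | 1 =>
        have hS : Sseq 1 = 1 := by rw [Sseq_eq_Tsum]; decide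
        have h4 := Qrec 0
        norm_num at h4 ⊢
        omega
      | 2 =>
        have hS : Sseq 2 = 2 := by rw [Sseq_eq_Tsum]; decide
        have h4 := Qrec 0
        have h5 := Qrec 1
        norm_num at h4 h5 ⊢
        omega
      | 3 =>
        have hS : Sseq 3 = 4 := by rw [Sseq_eq_Tsum]; decide
        have h4 := Qrec 0
        have h5 := Qrec 1
        have h6 := Qrec 2
        norm_num at h4 h5 h6 ⊢
        omega
      | (m + 4) =>
        have h := Qrec (m + 3)
        have i0 := ih m (by omega)
        have i1 := ih (m + 1) (by omega)
        have i2 := ih (m + 2) (by omega)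
        have i3 := ih (m + 3) (by omega)
        have hr := Sseq_rec m
        ring_nf at h i0 i1 i2 i3 hr ⊢
        omega
  intro n
  rw [main n, Sseq_eq_Tsum]
end

section
/- Fix natural numbers a, b. Let h : ℕ → ℕ be defined by h 0 = 1, h 1 = a, h 2 = a^2 + b, h 3 = a^3 + 3ab, and h n = a*h(n-1) + b*h(n-2) + a*b*h(n-3) + b^2*h(n-4) for n ≥ 4. Let c : ℕ → ℕ → ℕ be as defined by c 0 0 = c 1 0 = c 2 0 = c 2 1 = c 3 0 = 1, c 3 1 = 3, c n k = 0 for 2k > n, and c n k = c(n-1) k + c(n-2)(k-1) + c(n-3)(k-1) + c(n-4)(k-2) for n ≥ 4. Then for all n, h n = ∑_{k=0}^{⌊n/2⌋} c n k * a^(n-2k) * b^k. -/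
theorem stmt_5 (a b : ℕ) (h : ℕ → ℕ) (c : ℕ → ℤ → ℕ)
    (h0 : h 0 = 1) (h1 : h 1 = a) (h2 : h 2 = a ^ 2 + b) (h3 : h 3 = a ^ 3 + 3 * a * b)
    (hrec : ∀ n, h (n + 4) = a * h (n + 3) + b * h (n + 2) + a * b * h (n + 1) + b ^ 2 * h n)
    (hneg : ∀ n : ℕ, ∀ k : ℤ, k < 0 → c n k = 0)
    (hbig : ∀ n : ℕ, ∀ k : ℤ, (n : ℤ) < 2 * k → c n k = 0)
    (c00 : c 0 0 = 1) (c10 : c 1 0 = 1) (c20 : c 2 0 = 1) (c21 : c 2 1 = 1)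
    (c30 : c 3 0 = 1) (c31 : c 3 1 = 3)
    (crec : ∀ n : ℕ, 4 ≤ n → ∀ k : ℤ,
      c n k = c (n - 1) k + c (n - 2) (k - 1) + c (n - 3) (k - 1) + c (n - 4) (k - 2)) :
    ∀ n : ℕ, h n = ∑ k ∈ Finset.range (n / 2 + 1),
      c n (k : ℤ) * a ^ (n - 2 * k) * b ^ k := by
  have ext : ∀ (n m : ℕ), n / 2 ≤ m →
      ∑ k ∈ Finset.range (m + 1), c n (k : ℤ) * a ^ (n - 2 * k) * b ^ k
      = ∑ k ∈ Finset.range (n / 2 + 1), c n (k : ℤ) * a ^ (n - 2 * k) * b ^ k := by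
    intro n m hm
    symm
    apply Finset.sum_subset (Finset.range_subset_range.2 (by omega))
    intro k hk hk'
    simp only [Finset.mem_range] at hk hk'
    have : c n (k : ℤ) = 0 := hbig n k (by push_cast; omega)
    simp [this]
  intro n
  induction n using Nat.strong_induction_on with
  | _ n ih =>
    match n with
    | 0 => simp [h0, c00]
    | 1 => simp [h1, c10]
    | 2 =>
      rw [h2]
      simp [Finset.sum_range_succ, c20, c21]
    | 3 =>
      rw [h3]
      simp [Finset.sum_range_succ, c30, c31]
    | (n + 4) =>
      have e3 := ih (n + 3) (by omega)
      have e2 := ih (n + 2) (by omega)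
      have e1 := ih (n + 1) (by omega)
      have e0 := ih n (by omega)
      have hd4 : (n + 4) / 2 = n / 2 + 2 := by omega
      rw [hrec n, e3, e2, e1, e0, hd4]
      have lhs_split : ∑ k ∈ Finset.range (n / 2 + 2 + 1),
            c (n + 4) (k : ℤ) * a ^ (n + 4 - 2 * k) * b ^ k
          = (∑ k ∈ Finset.range (n / 2 + 2 + 1), c (n + 3) (k : ℤ) * a ^ (n + 4 - 2 * k) * b ^ k)
          + (∑ k ∈ Finset.range (n / 2 + 2 + 1), c (n + 2) ((k : ℤ) - 1) * a ^ (n + 4 - 2 * k) * b ^ k)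
          + (∑ k ∈ Finset.range (n / 2 + 2 + 1), c (n + 1) ((k : ℤ) - 1) * a ^ (n + 4 - 2 * k) * b ^ k)
          + (∑ k ∈ Finset.range (n / 2 + 2 + 1), c n ((k : ℤ) - 2) * a ^ (n + 4 - 2 * k) * b ^ k) := by
        rw [← Finset.sum_add_distrib, ← Finset.sum_add_distrib, ← Finset.sum_add_distrib]
        apply Finset.sum_congr rfl
        intro k _
        have := crec (n + 4) (by omega) (k : ℤ)
        simp only [show n + 4 - 1 = n + 3 from rfl, show n + 4 - 2 = n + 2 from rfl,
          show n + 4 - 3 = n + 1 from rfl, show n + 4 - 4 = n from rfl] at this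
        rw [this]
        ring
      rw [lhs_split]
      have s1 : ∑ k ∈ Finset.range (n / 2 + 2 + 1), c (n + 3) (k : ℤ) * a ^ (n + 4 - 2 * k) * b ^ k
          = a * ∑ k ∈ Finset.range ((n + 3) / 2 + 1), c (n + 3) (k : ℤ) * a ^ (n + 3 - 2 * k) * b ^ k := by
        rw [← ext (n + 3) (n / 2 + 2) (by omega), Finset.mul_sum]
        apply Finset.sum_congr rfl
        intro k _
        rcases le_or_gt (2 * k) (n + 3) with hle | hlt
        · have : n + 4 - 2 * k = (n + 3 - 2 * k) + 1 := by omega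
          rw [this, pow_succ]; ring
        · have : c (n + 3) (k : ℤ) = 0 := hbig (n + 3) k (by push_cast; omega)
          simp [this]
      have s2 : ∑ k ∈ Finset.range (n / 2 + 2 + 1), c (n + 2) ((k : ℤ) - 1) * a ^ (n + 4 - 2 * k) * b ^ k
          = b * ∑ k ∈ Finset.range ((n + 2) / 2 + 1), c (n + 2) (k : ℤ) * a ^ (n + 2 - 2 * k) * b ^ k := by
        rw [Finset.sum_range_succ']
        have hz : c (n + 2) ((0 : ℤ) - 1) = 0 := hneg _ _ (by norm_num)
        have hr : (n + 2) / 2 + 1 = n / 2 + 2 := by omega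
        rw [hr]
        simp only [Nat.cast_zero, hz, zero_mul, add_zero, Finset.mul_sum]
        apply Finset.sum_congr rfl
        intro k _
        have hc : ((k + 1 : ℕ) : ℤ) - 1 = (k : ℤ) := by push_cast; ring
        have he : n + 4 - 2 * (k + 1) = n + 2 - 2 * k := by omega
        rw [hc, he, pow_succ]
        ring
      have s3 : ∑ k ∈ Finset.range (n / 2 + 2 + 1), c (n + 1) ((k : ℤ) - 1) * a ^ (n + 4 - 2 * k) * b ^ k
          = a * b * ∑ k ∈ Finset.range ((n + 1) / 2 + 1), c (n + 1) (k : ℤ) * a ^ (n + 1 - 2 * k) * b ^ k := by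
        rw [Finset.sum_range_succ']
        have hz : c (n + 1) ((0 : ℤ) - 1) = 0 := hneg _ _ (by norm_num)
        have hext := ext (n + 1) (n / 2 + 1) (by omega)
        rw [show n / 2 + 1 + 1 = n / 2 + 2 by omega] at hext
        rw [← hext]
        simp only [Nat.cast_zero, hz, zero_mul, add_zero, Finset.mul_sum]
        apply Finset.sum_congr rfl
        intro k _
        have hc : ((k + 1 : ℕ) : ℤ) - 1 = (k : ℤ) := by push_cast; ring
        rw [hc]
        rcases le_or_gt (2 * k) (n + 1) with hle | hlt
        · have : n + 4 - 2 * (k + 1) = (n + 1 - 2 * k) + 1 := by omega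
          rw [this, pow_succ, pow_succ]; ring
        · have : c (n + 1) (k : ℤ) = 0 := hbig (n + 1) k (by push_cast; omega)
          simp [this]
      have s4 : ∑ k ∈ Finset.range (n / 2 + 2 + 1), c n ((k : ℤ) - 2) * a ^ (n + 4 - 2 * k) * b ^ k
          = b ^ 2 * ∑ k ∈ Finset.range (n / 2 + 1), c n (k : ℤ) * a ^ (n - 2 * k) * b ^ k := by
        rw [Finset.sum_range_succ']
        have hz0 : c n ((0 : ℤ) - 2) = 0 := hneg _ _ (by norm_num)
        simp only [Nat.cast_zero, hz0, zero_mul, add_zero]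
        rw [show n / 2 + 2 = (n / 2 + 1) + 1 by omega, Finset.sum_range_succ']
        have hz1 : c n (((0 + 1 : ℕ) : ℤ) - 2) = 0 := hneg _ _ (by norm_num)
        simp only [hz1, zero_mul, add_zero, Finset.mul_sum]
        apply Finset.sum_congr rfl
        intro k _
        have hc : ((k + 1 + 1 : ℕ) : ℤ) - 2 = (k : ℤ) := by push_cast; ring
        have he : n + 4 - 2 * (k + 1 + 1) = n - 2 * k := by omega
        rw [hc, he]
        ring
      rw [s1, s2, s3, s4]
end

section
/- Fix naturals a, b and define h : ℤ → ℕ with h n = 0 for n < 0, h 0 = 1, h 1 = a, h 2 = a^2 + b, h 3 = a^3 + 3ab, and h n = a*h(n-1) + b*h(n-2) + a*b*h(n-3) + b^2*h(n-4) for n ≥ 4. Then for all m, n ≥ 0: h(m+n) = h m * h n + h(m-1)*(b*h(n-1) + a*b*h(n-2) + b^2*h(n-3)) + h(m-2)*(a*b*h(n-1) + b^2*h(n-2)) + b^2 * h(n-1) * h(m-3). -/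
/-!
Since `h` vanishes on negative arguments, the initial values say exactly that the recurrence
`h (n + 1) = a h n + b h (n - 1) + a b h (n - 2) + b² h (n - 3)` holds for every `n ≥ 0`.
Write `P m n` (`addPairing`) for the right-hand side of the formula. Substituting this
recurrence for `h (m + 1)` and for `h (n + 1)` shows `P (m + 1) n = P m (n + 1)`, so
`h (m + n) = P m n` propagates from `m = 0`, where it reads `h n = h n`, to every `m ≥ 0`
by moving one step from `n` to `m` at a time.
-/

namespace HoneycombStrip

variable {R : Type*} [CommSemiring R] (a b : R) (u : ℤ → R)

def addPairing (m n : ℤ) : R :=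
  u m * u n
    + u (m - 1) * (b * u (n - 1) + a * b * u (n - 2) + b ^ 2 * u (n - 3))
    + u (m - 2) * (a * b * u (n - 1) + b ^ 2 * u (n - 2))
    + b ^ 2 * u (n - 1) * u (m - 3)

def RecurrenceAt (n : ℤ) : Prop :=
  u (n + 1) = a * u n + b * u (n - 1) + a * b * u (n - 2) + b ^ 2 * u (n - 3)

variable {a b u}

theorem recurrenceAt_of_initial (hneg : ∀ n : ℤ, n < 0 → u n = 0)
    (h0 : u 0 = 1) (h1 : u 1 = a) (h2 : u 2 = a ^ 2 + b) (h3 : u 3 = a ^ 3 + 3 * a * b)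
    (hrec : ∀ n : ℤ, 4 ≤ n →
      u n = a * u (n - 1) + b * u (n - 2) + a * b * u (n - 3) + b ^ 2 * u (n - 4))
    {n : ℤ} (hn : 0 ≤ n) : RecurrenceAt a b u n := by
  unfold RecurrenceAt
  obtain rfl | rfl | rfl | hn3 : n = 0 ∨ n = 1 ∨ n = 2 ∨ 3 ≤ n := by omega
  · simp [h0, h1, hneg]
  · simp [h0, h1, h2, hneg, sq]
  · norm_num [h0, h1, h2, h3, hneg]
    ring
  · have := hrec (n + 1) (by omega)
    rwa [add_sub_cancel_right, show n + 1 - 2 = n - 1 by ring, show n + 1 - 3 = n - 2 by ring,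
      show n + 1 - 4 = n - 3 by ring] at this

theorem addPairing_zero_left (hneg : ∀ n : ℤ, n < 0 → u n = 0) (h0 : u 0 = 1) (n : ℤ) :
    addPairing a b u 0 n = u n := by
  simp [addPairing, h0, hneg]

theorem addPairing_succ_left {m n : ℤ} (hm : RecurrenceAt a b u m)
    (hn : RecurrenceAt a b u n) :
    addPairing a b u (m + 1) n = addPairing a b u m (n + 1) := by
  unfold RecurrenceAt at hm hn
  simp only [addPairing, add_sub_cancel_right, show m + 1 - 2 = m - 1 by ring,
    show m + 1 - 3 = m - 2 by ring, show n + 1 - 2 = n - 1 by ring,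
    show n + 1 - 3 = n - 2 by ring, hm, hn]
  ring

theorem eq_addPairing (hneg : ∀ n : ℤ, n < 0 → u n = 0) (h0 : u 0 = 1)
    (hrec : ∀ n : ℤ, 0 ≤ n → RecurrenceAt a b u n) (m : ℕ) :
    ∀ n : ℤ, 0 ≤ n → u (m + n) = addPairing a b u m n := by
  induction m with
  | zero => simp [addPairing_zero_left hneg h0]
  | succ m ih =>
    intro n hn
    push_cast
    rw [addPairing_succ_left (hrec m m.cast_nonneg) (hrec n hn),
      ← ih (n + 1) (by omega), add_assoc, add_comm 1 n]

end HoneycombStrip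

open HoneycombStrip in
theorem stmt_6 (a b : ℕ) (h : ℤ → ℕ)
    (hneg : ∀ n : ℤ, n < 0 → h n = 0)
    (h0 : h 0 = 1) (h1 : h 1 = a) (h2 : h 2 = a ^ 2 + b) (h3 : h 3 = a ^ 3 + 3 * a * b)
    (hrec : ∀ n : ℤ, 4 ≤ n →
      h n = a * h (n - 1) + b * h (n - 2) + a * b * h (n - 3) + b ^ 2 * h (n - 4)) :
    ∀ m n : ℤ, 0 ≤ m → 0 ≤ n →
      h (m + n) = h m * h n
        + h (m - 1) * (b * h (n - 1) + a * b * h (n - 2) + b ^ 2 * h (n - 3))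
        + h (m - 2) * (a * b * h (n - 1) + b ^ 2 * h (n - 2))
        + b ^ 2 * h (n - 1) * h (m - 3) := by
  intro m n hm hn
  lift m to ℕ using hm
  exact eq_addPairing hneg h0
    (fun _ hk => recurrenceAt_of_initial hneg h0 h1 h2 h3 hrec hk) m n hn
end

section
/- Fix naturals a, b and define h : ℤ → ℤ with h n = 0 for n < 0, h 0 = 1, h 1 = a, h 2 = a^2 + b, h 3 = a^3 + 3ab, and h n = a*h(n-1) + b*h(n-2) + a*b*h(n-3) + b^2*h(n-4) for n ≥ 4. Then for all n ≥ 1: h n - a^n = b*h(n-2) + 2b*∑_{k=3}^{n} a^(k-2)*h(n-k) + b^2*∑_{k=3}^{n} a^(k-3)*h(n-k-1). -/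
lemma shift_aux (f : ℕ → ℤ) (m : ℕ) :
    ∑ k ∈ Finset.Icc 3 (m+4), f k = f 3 + ∑ k ∈ Finset.Icc 3 (m+3), f (k+1) := by
  rw [← Finset.Ico_add_one_right_eq_Icc, ← Finset.Ico_add_one_right_eq_Icc, Finset.sum_Ico_eq_sum_range,
    Finset.sum_Ico_eq_sum_range]
  have e1 : m + 4 + 1 - 3 = (m+1) + 1 := by omega
  have e2 : m + 3 + 1 - 3 = m + 1 := by omega
  rw [e1, e2, Finset.sum_range_succ', add_comm]
  rfl

theorem stmt_7 (a b : ℕ) (h : ℤ → ℤ)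
    (hneg : ∀ n : ℤ, n < 0 → h n = 0)
    (h0 : h 0 = 1) (h1 : h 1 = a) (h2 : h 2 = (a : ℤ) ^ 2 + b)
    (h3 : h 3 = (a : ℤ) ^ 3 + 3 * a * b)
    (hrec : ∀ n : ℤ, 4 ≤ n →
      h n = a * h (n - 1) + b * h (n - 2) + a * b * h (n - 3) + b ^ 2 * h (n - 4)) :
    ∀ n : ℕ, 1 ≤ n →
      h n - (a : ℤ) ^ n =
        b * h ((n : ℤ) - 2)
        + 2 * b * ∑ k ∈ Finset.Icc 3 n, (a : ℤ) ^ (k - 2) * h ((n : ℤ) - k)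
        + (b : ℤ) ^ 2 * ∑ k ∈ Finset.Icc 3 n, (a : ℤ) ^ (k - 3) * h ((n : ℤ) - k - 1) := by
  intro n hn
  rcases n with _ | _ | _ | m
  · omega
  · -- n = 1
    have e : Finset.Icc 3 1 = (∅ : Finset ℕ) := by decide
    rw [e]
    simp [h1, hneg (-1) (by norm_num), show ((1:ℕ):ℤ) - 2 = -1 by norm_num]
  · -- n = 2
    have e : Finset.Icc 3 2 = (∅ : Finset ℕ) := by decide
    rw [e]
    push_cast
    simp only [Finset.sum_empty, mul_zero, add_zero]
    rw [h0, h2]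
    ring
  · -- n = m + 3, induction on m
    clear hn
    induction m with
    | zero =>
      have e : Finset.Icc 3 3 = ({3} : Finset ℕ) := by decide
      rw [e]
      push_cast
      simp only [Finset.sum_singleton]
      norm_num
      rw [h0, h1, h3, hneg (-1) (by norm_num)]
      ring
    | succ m ih =>
      replace ih : h (↑(m+3):ℤ) - (a:ℤ) ^ (m+3) =
          b * h ((↑(m+3):ℤ) - 2)
          + 2 * b * ∑ k ∈ Finset.Icc 3 (m+3), (a:ℤ) ^ (k-2) * h ((↑(m+3):ℤ) - k)
          + (b:ℤ) ^ 2 * ∑ k ∈ Finset.Icc 3 (m+3), (a:ℤ) ^ (k-3) * h ((↑(m+3):ℤ) - k - 1) := ih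
      show h (↑(m+4):ℤ) - (a:ℤ) ^ (m+4) =
          b * h ((↑(m+4):ℤ) - 2)
          + 2 * b * ∑ k ∈ Finset.Icc 3 (m+4), (a:ℤ) ^ (k-2) * h ((↑(m+4):ℤ) - k)
          + (b:ℤ) ^ 2 * ∑ k ∈ Finset.Icc 3 (m+4), (a:ℤ) ^ (k-3) * h ((↑(m+4):ℤ) - k - 1)
      have hS1 : (∑ k ∈ Finset.Icc 3 (m+4), (a:ℤ) ^ (k-2) * h ((↑(m+4):ℤ) - k))
          = a * h ((m:ℤ)+1)
            + a * ∑ k ∈ Finset.Icc 3 (m+3), (a:ℤ) ^ (k-2) * h ((↑(m+3):ℤ) - k) := by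
        rw [shift_aux (fun k => (a:ℤ) ^ (k-2) * h ((↑(m+4):ℤ) - k)) m, Finset.mul_sum]
        congr 1
        · push_cast
          rw [show (m:ℤ) + 4 - 3 = (m:ℤ)+1 from by ring]
          norm_num
        refine Finset.sum_congr rfl fun k hk => ?_
        simp only [Finset.mem_Icc] at hk
        rw [show k+1-2 = (k-2)+1 from by omega, pow_succ]
        push_cast
        rw [show (m:ℤ) + 4 - (k+1) = (m:ℤ) + 3 - k from by ring]
        ring
      have hS2 : (∑ k ∈ Finset.Icc 3 (m+4), (a:ℤ) ^ (k-3) * h ((↑(m+4):ℤ) - k - 1))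
          = h (m:ℤ)
            + a * ∑ k ∈ Finset.Icc 3 (m+3), (a:ℤ) ^ (k-3) * h ((↑(m+3):ℤ) - k - 1) := by
        rw [shift_aux (fun k => (a:ℤ) ^ (k-3) * h ((↑(m+4):ℤ) - k - 1)) m, Finset.mul_sum]
        congr 1
        · push_cast
          rw [show (m:ℤ) + 4 - 3 - 1 = (m:ℤ) from by ring]
          norm_num
        refine Finset.sum_congr rfl fun k hk => ?_
        simp only [Finset.mem_Icc] at hk
        rw [show k+1-3 = (k-3)+1 from by omega, pow_succ]
        push_cast
        rw [show (m:ℤ) + 4 - (k+1) - 1 = (m:ℤ) + 3 - k - 1 from by ring]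
        ring
      have hr := hrec (↑(m+4)) (by push_cast; omega)
      rw [hS1, hS2]
      push_cast at hr ih ⊢
      rw [show (m:ℤ) + 4 - 1 = (m:ℤ) + 3 from by ring, show (m:ℤ) + 4 - 2 = (m:ℤ) + 2 from by ring,
        show (m:ℤ) + 4 - 3 = (m:ℤ) + 1 from by ring, show (m:ℤ) + 4 - 4 = (m:ℤ) from by ring] at hr
      rw [show (m:ℤ) + 3 - 2 = (m:ℤ) + 1 from by ring] at ih
      rw [show (m:ℤ) + 4 - 2 = (m:ℤ) + 2 from by ring]
      linear_combination hr + (a:ℤ) * ih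
end

section
/- Fix naturals a, b, let F be the Fibonacci sequence (F 0 = 0, F 1 = 1), and define h : ℤ → ℤ with h n = 0 for n < 0, h 0 = 1, h 1 = a, h 2 = a^2 + b, h 3 = a^3 + 3ab, and h n = a*h(n-1) + b*h(n-2) + a*b*h(n-3) + b^2*h(n-4) for n ≥ 4. Then for all n ≥ 0: h(2n) - b^n * F(n+1) = a * ∑_{k=0}^{n} b^k * h(2n-2k-1) * F(k+2). -/
/-! Write `u j = h (2j - 1)` and `S n = ∑_{k ≤ n} b^k u(n-k) F(k+2)`. Splitting
`F(k+2) = F(k+1) + F(k)` gives `S(n+2) = b S(n+1) + b² S(n) + u(n+2) + b u(n+1)`. On the other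
side, the recurrence for `h` at `2n+4` together with `F(n+3) = F(n+2) + F(n+1)` shows that
`E n = h(2n) - bⁿ F(n+1)` satisfies `E(n+2) = b E(n+1) + b² E(n) + a (u(n+2) + b u(n+1))`.
So `E` and `a S` obey the same second-order recurrence, and they agree at `n = 0, 1`. -/

open Finset

section FibConvolution

variable {R : Type*} [CommRing R]

def fibConv (b : R) (u : ℕ → R) (n : ℕ) : R :=
  ∑ k ∈ range (n + 1), b ^ k * u (n - k) * Nat.fib (k + 2)

theorem fibConv_add_two (b : R) (u : ℕ → R) (n : ℕ) :
    fibConv b u (n + 2) =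
      b * fibConv b u (n + 1) + b ^ 2 * fibConv b u n + u (n + 2) + b * u (n + 1) := by
  have hsplit : ∀ k : ℕ, b ^ (k + 1) * u (n + 2 - (k + 1)) * (Nat.fib (k + 1 + 2) : R) =
      b * (b ^ k * u (n + 1 - k) * Nat.fib (k + 2)) +
        b ^ (k + 1) * u (n + 1 - k) * Nat.fib (k + 1) := by
    intro k
    rw [Nat.fib_add_two, show n + 2 - (k + 1) = n + 1 - k by omega]
    push_cast; ring
  have hshift : ∀ k : ℕ, b ^ (k + 1 + 1) * u (n + 1 - (k + 1)) * (Nat.fib (k + 1 + 1) : R) =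
      b ^ 2 * (b ^ k * u (n - k) * Nat.fib (k + 2)) := by
    intro k
    rw [show n + 1 - (k + 1) = n - k by omega]
    ring
  simp only [fibConv]
  rw [sum_range_succ' _ (n + 2), sum_congr rfl fun k _ => hsplit k, sum_add_distrib, ← mul_sum,
    sum_range_succ' (fun k => b ^ (k + 1) * u (n + 1 - k) * (Nat.fib (k + 1) : R)) (n + 1),
    sum_congr rfl fun k _ => hshift k, ← mul_sum]
  simp only [zero_add, pow_one, tsub_zero, Nat.fib_one, Nat.cast_one, mul_one, pow_zero, one_mul,
    Nat.fib_two]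
  ring

theorem eq_of_two_step_recurrence {x y : ℕ → R} (b c : R) (h0 : x 0 = y 0) (h1 : x 1 = y 1)
    (hstep : ∀ n, x (n + 2) - b * x (n + 1) - c * x n = y (n + 2) - b * y (n + 1) - c * y n) :
    x = y := by
  funext n
  induction n using Nat.twoStepInduction with
  | zero => exact h0
  | one => exact h1
  | more n ihn ihn1 => linear_combination hstep n + b * ihn1 + c * ihn

end FibConvolution

theorem stmt_8_general (a b : ℕ) (h : ℤ → ℤ)
    (hneg : ∀ n : ℤ, n < 0 → h n = 0)
    (h0 : h 0 = 1) (h1 : h 1 = a) (h2 : h 2 = (a : ℤ) ^ 2 + b)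
    (hrec : ∀ n : ℤ, 4 ≤ n →
      h n = a * h (n - 1) + b * h (n - 2) + a * b * h (n - 3) + b ^ 2 * h (n - 4)) :
    ∀ n : ℕ,
      h (2 * n) - (b : ℤ) ^ n * Nat.fib (n + 1) =
        a * ∑ k ∈ Finset.range (n + 1),
          (b : ℤ) ^ k * h (2 * (n : ℤ) - 2 * k - 1) * Nat.fib (k + 2) := by
  set u : ℕ → ℤ := fun j => h (2 * j - 1)
  have hsum : ∀ n : ℕ,
      ∑ k ∈ range (n + 1), (b : ℤ) ^ k * h (2 * (n : ℤ) - 2 * k - 1) * Nat.fib (k + 2) =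
        fibConv (b : ℤ) u n := by
    refine fun n => sum_congr rfl fun k hk => ?_
    dsimp only [u]
    rw [Nat.cast_sub (Nat.lt_succ_iff.mp (mem_range.mp hk))]
    ring_nf
  have hm1 : h (-1) = 0 := hneg (-1) (by norm_num)
  have key : (fun n : ℕ => h (2 * n) - (b : ℤ) ^ n * Nat.fib (n + 1)) =
      fun n => a * fibConv (b : ℤ) u n := by
    refine eq_of_two_step_recurrence (b : ℤ) ((b : ℤ) ^ 2) ?_ ?_ fun n => ?_
    · simp [fibConv, u, h0, hm1]
    · simp [fibConv, sum_range_succ, u, h1, h2, hm1, Nat.fib_add_two, sq]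
    · have hr := hrec (2 * n + 4) (by omega)
      simp only [fibConv_add_two, u]
      push_cast
      rw [show 2 * ((n : ℤ) + 2) = 2 * n + 4 by ring, hr, Nat.fib_add_two (n := n + 1)]
      push_cast
      ring_nf
  intro n
  rw [hsum]
  exact congrFun key n

theorem stmt_8 (a b : ℕ) (h : ℤ → ℤ)
    (hneg : ∀ n : ℤ, n < 0 → h n = 0)
    (h0 : h 0 = 1) (h1 : h 1 = a) (h2 : h 2 = (a : ℤ) ^ 2 + b)
    (h3 : h 3 = (a : ℤ) ^ 3 + 3 * a * b)
    (hrec : ∀ n : ℤ, 4 ≤ n →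
      h n = a * h (n - 1) + b * h (n - 2) + a * b * h (n - 3) + b ^ 2 * h (n - 4)) :
    ∀ n : ℕ,
      h (2 * n) - (b : ℤ) ^ n * Nat.fib (n + 1) =
        a * ∑ k ∈ Finset.range (n + 1),
          (b : ℤ) ^ k * h (2 * (n : ℤ) - 2 * k - 1) * Nat.fib (k + 2) :=
  stmt_8_general a b h hneg h0 h1 h2 hrec
end

section
/- Let F be the Fibonacci sequence (F 0 = 0, F 1 = 1) and let t : ℕ → ℕ → ℕ be defined by t n 0 = F(n+1), t n k = 0 if 3k > n, and t n k = t(n-1) k + t(n-2) k + t(n-3)(k-1) for n ≥ 3, 1 ≤ k (with out-of-range terms 0). Then for all n and k with 3k ≤ n: t n k = ∑ over tuples (i₀,...,i_k) of nonnegative integers with i₀+⋯+i_k = n-2k+1 of the product F(i₀)⋯F(i_k). -/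
/-!
Write `S k m` (`fibConvPow k m`) for the sum over `k`-tuples with entry sum `m` of the
products of Fibonacci numbers, i.e. the coefficient of `x ^ m` in `(x / (1 - x - x ^ 2)) ^ k`.
Splitting off the first entry and using `fib (i + 2) = fib (i + 1) + fib i` gives
`S (k + 1) (m + 2) = S (k + 1) (m + 1) + S (k + 1) m + S k (m + 1)`, which under
`m = n + 1 - 2k` is exactly the recurrence of `t`. Both sides also vanish when `n < 3k`:
a `(k + 1)`-tuple with entry sum at most `k` has a zero entry, and `fib 0 = 0`.
-/

open Finset

theorem Finset.Nat.sum_antidiagonalTuple_succ {M : Type*} [AddCommMonoid M] (k n : ℕ)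
    (f : (Fin (k + 1) → ℕ) → M) :
    ∑ x ∈ Nat.antidiagonalTuple (k + 1) n, f x =
      ∑ p ∈ antidiagonal n, ∑ x ∈ Nat.antidiagonalTuple k p.2, f (Fin.cons p.1 x) := by
  rw [sum_sigma']
  refine sum_bij' (fun x _ => ⟨(x 0, ∑ i, Fin.tail x i), Fin.tail x⟩)
    (fun a _ => Fin.cons a.1.1 a.2) ?_ ?_ ?_ ?_ ?_
  · intro x hx
    simp only [mem_sigma, HasAntidiagonal.mem_antidiagonal, Nat.mem_antidiagonalTuple] at hx ⊢
    exact ⟨by rw [← hx, Fin.sum_univ_succ]; rfl, trivial⟩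
  · rintro ⟨⟨a, b⟩, x⟩ h
    simp only [mem_sigma, HasAntidiagonal.mem_antidiagonal, Nat.mem_antidiagonalTuple] at h ⊢
    rw [Fin.sum_cons, h.2, h.1]
  · intro x _
    exact Fin.cons_self_tail x
  · rintro ⟨⟨a, b⟩, x⟩ h
    simp only [mem_sigma, Nat.mem_antidiagonalTuple] at h
    simp [h.2]
  · intro x _
    simp

def fibConvPow (k m : ℕ) : ℕ :=
  ∑ x ∈ Nat.antidiagonalTuple k m, ∏ i, Nat.fib (x i)

theorem fibConvPow_one (m : ℕ) : fibConvPow 1 m = Nat.fib m := by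
  simp [fibConvPow]

theorem fibConvPow_succ (k m : ℕ) :
    fibConvPow (k + 1) m = ∑ p ∈ antidiagonal m, Nat.fib p.1 * fibConvPow k p.2 := by
  simp only [fibConvPow, Nat.sum_antidiagonalTuple_succ, Fin.prod_univ_succ, Fin.cons_zero,
    Fin.cons_succ, mul_sum]

theorem fibConvPow_succ_succ (k m : ℕ) :
    fibConvPow (k + 1) (m + 1) =
      ∑ p ∈ antidiagonal m, Nat.fib (p.1 + 1) * fibConvPow k p.2 := by
  rw [fibConvPow_succ, Nat.sum_antidiagonal_succ, Nat.fib_zero, zero_mul, zero_add]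

theorem fibConvPow_eq_zero_of_lt {k m : ℕ} (h : m < k) : fibConvPow k m = 0 := by
  refine sum_eq_zero fun x hx => ?_
  rw [Nat.mem_antidiagonalTuple] at hx
  obtain ⟨i, hi⟩ : ∃ i, x i = 0 := by
    by_contra! hpos
    have : ∑ _i : Fin k, 1 ≤ ∑ i, x i :=
      sum_le_sum fun i _ => Nat.one_le_iff_ne_zero.2 (hpos i)
    simp only [sum_const, card_univ, Fintype.card_fin, smul_eq_mul, mul_one] at this
    omega
  exact prod_eq_zero (mem_univ i) (by rw [hi, Nat.fib_zero])

theorem fibConvPow_succ_add_two (k m : ℕ) :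
    fibConvPow (k + 1) (m + 2) =
      fibConvPow (k + 1) (m + 1) + fibConvPow (k + 1) m + fibConvPow k (m + 1) := by
  rw [fibConvPow_succ_succ, Nat.sum_antidiagonal_succ, fibConvPow_succ_succ, fibConvPow_succ]
  simp only [Nat.fib_add_two, add_mul, sum_add_distrib]
  ring

section

variable (t : ℕ → ℕ → ℕ) (h0 : ∀ n, t n 0 = Nat.fib (n + 1))
  (hbig : ∀ n k, n < 3 * k → t n k = 0)
  (hrec : ∀ n k, t (n + 3) (k + 1) = t (n + 2) (k + 1) + t (n + 1) (k + 1) + t n k)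
include h0 hbig hrec

-- With the index `n + 1 - 2k` the identity holds for all `n` and `k`, including `n < 2k`
-- where the subtraction truncates.
theorem eq_fibConvPow_of_rec : ∀ n k, t n k = fibConvPow (k + 1) (n + 1 - 2 * k)
  | n, 0 => by rw [h0, fibConvPow_one, Nat.sub_zero]
  | n, k + 1 => by
    by_cases hn : n < 3 * (k + 1)
    · rw [hbig n _ hn, fibConvPow_eq_zero_of_lt (by omega)]
    obtain ⟨n, rfl⟩ : ∃ n', n = n' + 3 := ⟨n - 3, by omega⟩
    rw [hrec, eq_fibConvPow_of_rec (n + 2) (k + 1), eq_fibConvPow_of_rec (n + 1) (k + 1),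
      eq_fibConvPow_of_rec n k]
    obtain ⟨m, hm⟩ : ∃ m, n - 2 * k = m := ⟨_, rfl⟩
    rw [show n + 3 + 1 - 2 * (k + 1) = m + 2 by omega,
      show n + 2 + 1 - 2 * (k + 1) = m + 1 by omega,
      show n + 1 + 1 - 2 * (k + 1) = m by omega,
      show n + 1 - 2 * k = m + 1 by omega, fibConvPow_succ_add_two]

end

theorem stmt_12 (t : ℕ → ℕ → ℕ)
    (h0 : ∀ n, t n 0 = Nat.fib (n + 1))
    (hbig : ∀ n k, n < 3 * k → t n k = 0)
    (hrec : ∀ n k, t (n + 3) (k + 1) = t (n + 2) (k + 1) + t (n + 1) (k + 1) + t n k) :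
    ∀ n k, 3 * k ≤ n →
      t n k = ∑ f ∈ Finset.Nat.antidiagonalTuple (k + 1) (n - 2 * k + 1),
        ∏ i, Nat.fib (f i) :=
  fun n k hk => by rw [eq_fibConvPow_of_rec t h0 hbig hrec, Nat.sub_add_comm (by omega)]; rfl
end

section
/- Let T be the tribonacci sequence (T 0 = T 1 = 0, T 2 = 1, T n = T(n-1)+T(n-2)+T(n-3) for n ≥ 3). Then for all n ≥ 0: T(n+2) = ∑_{k=0}^{⌊n/3⌋} ∑_{l=0}^{⌊(n-3k)/2⌋} (n-3k-l choose l) * (n-2k-l choose k). -/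
private def bb (n k l : ℕ) : ℕ :=
  Nat.choose (n - 3 * k - l) l * Nat.choose (n - 2 * k - l) k

private lemma bb_zero {n k l : ℕ} (h : n < 3 * k + 2 * l) : bb n k l = 0 := by
  unfold bb
  rcases Nat.eq_zero_or_pos l with rfl | hl
  · have hlt : n - 2 * k - 0 < k := by omega
    rw [Nat.choose_eq_zero_of_lt hlt, mul_zero]
  · have hlt : n - 3 * k - l < l := by omega
    rw [Nat.choose_eq_zero_of_lt hlt, zero_mul]

private lemma sum_eq (m M M' : ℕ) (hM : m + 1 ≤ M) (hM' : m + 1 ≤ M') :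
    ∑ k ∈ Finset.range M, ∑ l ∈ Finset.range M', bb m k l
      = ∑ k ∈ Finset.range (m + 1), ∑ l ∈ Finset.range (m + 1), bb m k l := by
  rw [← Finset.sum_subset (Finset.range_subset_range.2 hM)]
  · apply Finset.sum_congr rfl
    intro k _
    rw [← Finset.sum_subset (Finset.range_subset_range.2 hM')]
    intro l _ hl'
    simp only [Finset.mem_range] at hl'
    exact bb_zero (by omega)
  · intro k _ hk'
    simp only [Finset.mem_range] at hk'
    apply Finset.sum_eq_zero
    intro l _
    exact bb_zero (by omega)

private lemma pterm (n k l : ℕ) :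
    Nat.choose (n + 2 - 3 * k - l) (l + 1) * Nat.choose (n + 1 - 2 * k - l) k
      = Nat.choose (n + 1 - 3 * k - l) (l + 1) * Nat.choose (n + 1 - 2 * k - l) k
        + Nat.choose (n + 1 - 3 * k - l) l * Nat.choose (n + 1 - 2 * k - l) k := by
  by_cases h : 3 * k + l + 1 ≤ n + 2
  · have h1 : n + 2 - 3 * k - l = (n + 1 - 3 * k - l) + 1 := by omega
    rw [h1, Nat.choose_succ_succ, add_mul]
    ring
  · have h1 : n + 2 - 3 * k - l = 0 := by omega
    have h2 : n + 1 - 3 * k - l = 0 := by omega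
    rw [h1, h2]
    rcases Nat.eq_zero_or_pos k with rfl | hk
    · have hl : 0 < l := by omega
      rw [Nat.choose_eq_zero_of_lt hl, Nat.choose_eq_zero_of_lt (by omega : 0 < l + 1)]
      ring
    · have hlt : n + 1 - 2 * k - l < k := by omega
      rw [Nat.choose_eq_zero_of_lt hlt]
      ring

private lemma sterm (n k l : ℕ) :
    Nat.choose (n - 3 * k - l) l * Nat.choose (n + 1 - 2 * k - l) (k + 1)
      = Nat.choose (n - 3 * k - l) l * Nat.choose (n - 2 * k - l) (k + 1)
        + Nat.choose (n - 3 * k - l) l * Nat.choose (n - 2 * k - l) k := by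
  by_cases h : 2 * k + l ≤ n
  · have h1 : n + 1 - 2 * k - l = (n - 2 * k - l) + 1 := by omega
    rw [h1, Nat.choose_succ_succ, mul_add]
    ring
  · have h1 : n + 1 - 2 * k - l = 0 := by omega
    have h2 : n - 2 * k - l = 0 := by omega
    rw [h1, h2]
    rcases Nat.eq_zero_or_pos k with rfl | hk
    · have h3 : n - 3 * 0 - l = 0 := by omega
      rw [h3, Nat.choose_eq_zero_of_lt (by omega : 0 < l)]
      ring
    · rw [Nat.choose_eq_zero_of_lt hk,
          Nat.choose_eq_zero_of_lt (by omega : (0:ℕ) < k + 1)]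
      ring

private lemma Grec (n k : ℕ) :
    ∑ l ∈ Finset.range (n + 4),
        Nat.choose (n + 3 - 3 * k - l) l * Nat.choose (n + 2 - 2 * k - l) k
      = (∑ l ∈ Finset.range (n + 4), bb (n + 2) k l)
        + ∑ l ∈ Finset.range (n + 4), bb (n + 1) k l := by
  rw [Finset.sum_range_succ'
    (fun l => Nat.choose (n + 3 - 3 * k - l) l * Nat.choose (n + 2 - 2 * k - l) k) (n + 3)]
  have e1 : ∀ l, Nat.choose (n + 3 - 3 * k - (l + 1)) (l + 1)
        * Nat.choose (n + 2 - 2 * k - (l + 1)) k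
      = bb (n + 2) k (l + 1) + bb (n + 1) k l := by
    intro l
    unfold bb
    rw [(show n + 3 - 3 * k - (l + 1) = n + 2 - 3 * k - l by omega),
        (show n + 2 - 2 * k - (l + 1) = n + 1 - 2 * k - l by omega),
        (show n + 2 - 3 * k - (l + 1) = n + 1 - 3 * k - l by omega)]
    exact pterm n k l
  simp only [e1]
  rw [Finset.sum_add_distrib]
  have e0 : Nat.choose (n + 3 - 3 * k - 0) 0 * Nat.choose (n + 2 - 2 * k - 0) k
      = bb (n + 2) k 0 := by
    unfold bb
    rw [Nat.choose_zero_right, Nat.choose_zero_right]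
  have e2 : ∑ l ∈ Finset.range (n + 4), bb (n + 1) k l
      = ∑ l ∈ Finset.range (n + 3), bb (n + 1) k l := by
    rw [Finset.sum_range_succ, bb_zero (by omega : n + 1 < 3 * k + 2 * (n + 3)), add_zero]
  rw [e0, e2, Finset.sum_range_succ' (fun l => bb (n + 2) k l) (n + 3)]
  ring

private lemma Srec (n : ℕ) :
    (∑ k ∈ Finset.range (n + 4), ∑ l ∈ Finset.range (n + 4), bb (n + 3) k l)
      = (∑ k ∈ Finset.range (n + 4), ∑ l ∈ Finset.range (n + 4), bb (n + 2) k l)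
        + (∑ k ∈ Finset.range (n + 4), ∑ l ∈ Finset.range (n + 4), bb (n + 1) k l)
        + ∑ k ∈ Finset.range (n + 3), ∑ l ∈ Finset.range (n + 4), bb n k l := by
  have hk0 : ∑ l ∈ Finset.range (n + 4), bb (n + 3) 0 l
      = (∑ l ∈ Finset.range (n + 4), bb (n + 2) 0 l)
        + ∑ l ∈ Finset.range (n + 4), bb (n + 1) 0 l := by
    rw [← Grec n 0]
    apply Finset.sum_congr rfl
    intro l _
    unfold bb
    rw [Nat.choose_zero_right, Nat.choose_zero_right]
  have hks : ∀ k, ∑ l ∈ Finset.range (n + 4), bb (n + 3) (k + 1) l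
      = (∑ l ∈ Finset.range (n + 4), bb (n + 2) (k + 1) l)
        + (∑ l ∈ Finset.range (n + 4), bb (n + 1) (k + 1) l)
        + ∑ l ∈ Finset.range (n + 4), bb n k l := by
    intro k
    have e : ∀ l, bb (n + 3) (k + 1) l
        = Nat.choose (n + 3 - 3 * (k + 1) - l) l
            * Nat.choose (n + 2 - 2 * (k + 1) - l) (k + 1) + bb n k l := by
      intro l
      unfold bb
      rw [(show n + 3 - 3 * (k + 1) - l = n - 3 * k - l by omega),
          (show n + 3 - 2 * (k + 1) - l = n + 1 - 2 * k - l by omega),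
          (show n + 2 - 2 * (k + 1) - l = n - 2 * k - l by omega)]
      exact sterm n k l
    simp only [e]
    rw [Finset.sum_add_distrib, Grec n (k + 1)]
  rw [Finset.sum_range_succ' (fun k => ∑ l ∈ Finset.range (n + 4), bb (n + 3) k l) (n + 3),
      hk0]
  simp only [hks]
  rw [Finset.sum_add_distrib, Finset.sum_add_distrib,
      Finset.sum_range_succ' (fun k => ∑ l ∈ Finset.range (n + 4), bb (n + 2) k l) (n + 3),
      Finset.sum_range_succ' (fun k => ∑ l ∈ Finset.range (n + 4), bb (n + 1) k l) (n + 3)]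
  ring

private def Sstd (m : ℕ) : ℕ :=
  ∑ k ∈ Finset.range (m + 1), ∑ l ∈ Finset.range (m + 1), bb m k l

private lemma Sstd_rec (n : ℕ) : Sstd (n + 3) = Sstd (n + 2) + Sstd (n + 1) + Sstd n := by
  unfold Sstd
  rw [← sum_eq (n + 3) (n + 4) (n + 4) (by omega) (by omega), Srec n,
      sum_eq (n + 2) (n + 4) (n + 4) (by omega) (by omega),
      sum_eq (n + 1) (n + 4) (n + 4) (by omega) (by omega),
      sum_eq n (n + 3) (n + 4) (by omega) (by omega)]

private lemma Sstd0 : Sstd 0 = 1 := by decide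
private lemma Sstd1 : Sstd 1 = 1 := by decide
private lemma Sstd2 : Sstd 2 = 2 := by decide

theorem stmt_17 (T : ℕ → ℕ)
    (T0 : T 0 = 0) (T1 : T 1 = 0) (T2 : T 2 = 1)
    (Trec : ∀ n, T (n + 3) = T (n + 2) + T (n + 1) + T n) :
    ∀ n : ℕ, T (n + 2) = ∑ k ∈ Finset.range (n / 3 + 1),
      ∑ l ∈ Finset.range ((n - 3 * k) / 2 + 1),
        Nat.choose (n - 3 * k - l) l * Nat.choose (n - 2 * k - l) k := by
  have key : ∀ n, T (n + 2) = Sstd n := by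
    intro n
    induction n using Nat.strong_induction_on with
    | _ n ih =>
      match n with
      | 0 => rw [T2, Sstd0]
      | 1 => rw [show (1:ℕ) + 2 = 0 + 3 from rfl, Trec, T2, T1, T0, Sstd1]
      | 2 => rw [show (2:ℕ) + 2 = 1 + 3 from rfl, Trec, T1,
                 show (1:ℕ) + 2 = 0 + 3 from rfl, Trec, T2, T1, T0, Sstd2]
      | (m + 3) =>
        have h1 := ih (m + 2) (by omega)
        have h2 := ih (m + 1) (by omega)
        have h3 := ih m (by omega)
        have ht : T (m + 3 + 2) = T (m + 2 + 2) + T (m + 1 + 2) + T (m + 2) :=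
          Trec (m + 2)
        rw [ht, h1, h2, h3, Sstd_rec]
  intro n
  rw [key n]
  unfold Sstd
  calc ∑ k ∈ Finset.range (n + 1), ∑ l ∈ Finset.range (n + 1), bb n k l
      = ∑ k ∈ Finset.range (n / 3 + 1), ∑ l ∈ Finset.range (n + 1), bb n k l := by
        rw [← Finset.sum_subset (Finset.range_subset_range.2 (by omega : n / 3 + 1 ≤ n + 1))]
        intro k _ hk'
        simp only [Finset.mem_range] at hk'
        exact Finset.sum_eq_zero fun l _ => bb_zero (by omega)
    _ = ∑ k ∈ Finset.range (n / 3 + 1),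
          ∑ l ∈ Finset.range ((n - 3 * k) / 2 + 1), bb n k l := by
        apply Finset.sum_congr rfl
        intro k hk
        simp only [Finset.mem_range] at hk
        rw [← Finset.sum_subset
          (Finset.range_subset_range.2 (by omega : (n - 3 * k) / 2 + 1 ≤ n + 1))]
        intro l _ hl'
        simp only [Finset.mem_range] at hl'
        exact bb_zero (by omega)
    _ = ∑ k ∈ Finset.range (n / 3 + 1),
          ∑ l ∈ Finset.range ((n - 3 * k) / 2 + 1),
            Nat.choose (n - 3 * k - l) l * Nat.choose (n - 2 * k - l) k :=
        Finset.sum_congr rfl fun k _ => Finset.sum_congr rfl fun l _ => rfl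
end

section
/- Let T be the tribonacci sequence (T 0 = T 1 = 0, T 2 = 1, T n = T(n-1)+T(n-2)+T(n-3) for n ≥ 3) and F the Fibonacci sequence (F 0 = 0, F 1 = 1). Extend T to index -1 by T(-1) = 1 (consistent with the recurrence backwards). Then for all n ≥ 0: T(n+2) = ∑_{k=0}^{n+1} F k * T(n-k), where T(n-k) is interpreted with T(-1) = 1. -/
theorem stmt_19 (T : ℤ → ℕ)
    (Tm1 : T (-1) = 1) (T0 : T 0 = 0) (T1 : T 1 = 0) (T2 : T 2 = 1)
    (Trec : ∀ n : ℤ, 3 ≤ n → T n = T (n - 1) + T (n - 2) + T (n - 3)) :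
    ∀ n : ℕ, T ((n : ℤ) + 2) = ∑ k ∈ Finset.range (n + 2),
      Nat.fib k * T ((n : ℤ) - k) := by
  intro n
  induction n using Nat.twoStepInduction with
  | zero =>
    norm_num [Finset.sum_range_succ, Tm1, T0, T2]
  | one =>
    have h3 : T 3 = 1 := by
      have h := Trec 3 (by norm_num)
      norm_num [T2, T1, T0] at h
      omega
    norm_num [Finset.sum_range_succ, Tm1, T0, T1, h3]
  | more m ih1 ih2 =>
    have hrec : T ((m : ℤ) + 4) = T ((m : ℤ) + 3) + T ((m : ℤ) + 2) + T ((m : ℤ) + 1) := by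
      have h := Trec ((m : ℤ) + 4) (by omega)
      have e1 : (m : ℤ) + 4 - 1 = (m : ℤ) + 3 := by ring
      have e2 : (m : ℤ) + 4 - 2 = (m : ℤ) + 2 := by ring
      have e3 : (m : ℤ) + 4 - 3 = (m : ℤ) + 1 := by ring
      rw [e1, e2, e3] at h
      exact h
    have hgoal : ((m + 2 : ℕ) : ℤ) + 2 = (m : ℤ) + 4 := by push_cast; ring
    have hsum : ∀ k : ℕ, ((m + 2 : ℕ) : ℤ) - (k : ℤ) = (m : ℤ) + 2 - k := by
      intro k; push_cast; ring
    rw [hgoal]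
    simp only [hsum]
    -- peel off two terms from the front
    rw [show m + 2 + 2 = (m + 3) + 1 from rfl, Finset.sum_range_succ']
    rw [show m + 3 = (m + 2) + 1 from rfl, Finset.sum_range_succ']
    have hfib : ∀ k : ℕ, Nat.fib (k + 1 + 1) = Nat.fib k + Nat.fib (k + 1) := by
      intro k; rw [Nat.fib_add_two]
    have hsplit : ∑ k ∈ Finset.range (m + 2), Nat.fib (k + 1 + 1) * T ((m : ℤ) + 2 - (↑(k + 1 + 1))) =
        (∑ k ∈ Finset.range (m + 2), Nat.fib k * T ((m : ℤ) - k)) +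
        (∑ k ∈ Finset.range (m + 2), Nat.fib (k + 1) * T ((m : ℤ) - k)) := by
      rw [← Finset.sum_add_distrib]
      apply Finset.sum_congr rfl
      intro k _
      have e : (m : ℤ) + 2 - (↑(k + 1 + 1)) = (m : ℤ) - k := by push_cast; ring
      rw [e, hfib, add_mul]
    rw [hsplit]
    -- second sum equals T(m+3) via ih2
    have ih2' : T ((m : ℤ) + 3) = ∑ k ∈ Finset.range (m + 2), Nat.fib (k + 1) * T ((m : ℤ) - k) := by
      have e : ((m + 1 : ℕ) : ℤ) + 2 = (m : ℤ) + 3 := by push_cast; ring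
      rw [e] at ih2
      rw [ih2, show m + 1 + 2 = (m + 2) + 1 from rfl, Finset.sum_range_succ']
      simp only [Nat.fib_zero, Nat.cast_zero, zero_mul, add_zero]
      apply Finset.sum_congr rfl
      intro k _
      have e2 : ((m + 1 : ℕ) : ℤ) - (↑(k + 1)) = (m : ℤ) - k := by push_cast; ring
      rw [e2]
    rw [← ih1, ← ih2']
    have e1 : (m : ℤ) + 2 - 1 = (m : ℤ) + 1 := by ring
    norm_num [e1]
    omega
end
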